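/- arXiv:1111.7077 — 3 statements merged into one kernel-verified Lean document; each statement's English description precedes it below -/
import Mathlib

section
/- Let φ: [0,∞) → ℝ be a continuous function with φ(0) = 1 that belongs to the class Φ_1 and satisfies φ(t) = 0 for all t ≥ π. Then the restriction ψ = φ|_{[0,π]} belongs to the class Ψ_1. -/
open scoped BigOperators

noncomputable section

/-- `ψ` composed with the great circle distance is positive definite on the
sphere `S^d ⊆ ℝ^(d+1)`. -/
def IsPosDefOnSphere (d : ℕ) (ψ : ℝ → ℝ) : Prop :=
  ∀ (n : ℕ) (x : Fin n → EuclideanSpace ℝ (Fin (d + 1))),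
    (∀ i, ‖x i‖ = 1) → Function.Injective x →
    ∀ c : Fin n → ℝ,
      0 ≤ ∑ i, ∑ j, c i * c j * ψ (Real.arccos ((inner ℝ (x i) (x j) : ℝ)))

/-- `ψ` composed with the great circle distance is strictly positive definite on
the sphere `S^d ⊆ ℝ^(d+1)`. -/
def IsStrictPosDefOnSphere (d : ℕ) (ψ : ℝ → ℝ) : Prop :=
  ∀ (n : ℕ) (x : Fin n → EuclideanSpace ℝ (Fin (d + 1))),
    (∀ i, ‖x i‖ = 1) → Function.Injective x →
    ∀ c : Fin n → ℝ, c ≠ 0 →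
      0 < ∑ i, ∑ j, c i * c j * ψ (Real.arccos ((inner ℝ (x i) (x j) : ℝ)))

/-- The class `Ψ_d`. -/
def memPsi (d : ℕ) (ψ : ℝ → ℝ) : Prop :=
  ContinuousOn ψ (Set.Icc 0 Real.pi) ∧ ψ 0 = 1 ∧ IsPosDefOnSphere d ψ

/-- The class `Ψ_d^+`. -/
def memPsiPlus (d : ℕ) (ψ : ℝ → ℝ) : Prop :=
  ContinuousOn ψ (Set.Icc 0 Real.pi) ∧ ψ 0 = 1 ∧ IsStrictPosDefOnSphere d ψ

/-- `φ` composed with the Euclidean distance is positive definite on `ℝ^d`. -/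
def IsPosDefOnEuclidean (d : ℕ) (φ : ℝ → ℝ) : Prop :=
  ∀ (n : ℕ) (x : Fin n → EuclideanSpace ℝ (Fin d)), Function.Injective x →
    ∀ c : Fin n → ℝ, 0 ≤ ∑ i, ∑ j, c i * c j * φ (‖x i - x j‖)

/-- The class `Φ_d`. -/
def memPhi (d : ℕ) (φ : ℝ → ℝ) : Prop :=
  ContinuousOn φ (Set.Ici 0) ∧ φ 0 = 1 ∧ IsPosDefOnEuclidean d φ

/-!
Write the points of `S¹` as `(cos αᵢ, sin αᵢ)` and place the `N` translates `αᵢ + 2πk`,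
`0 ≤ k < N`, on the line; they are pairwise distinct. Because `φ` vanishes on `[π, ∞)`, the
translates of `αᵢ` and `αⱼ` interact only when their difference is the representative of
`αᵢ - αⱼ` in `[-π, π]`, whose distance from `0` is the great circle distance `θᵢⱼ`; this happens
for exactly `N - |mᵢⱼ|` pairs of translates, where `mᵢⱼ` is the rounding of `(αᵢ - αⱼ) / 2π`.
So the nonnegative `Φ₁` quadratic form of the translates is `N·S - B`, with `S` the spherical
form and `B` independent of `N`; dividing by `N` and letting `N → ∞` gives `S ≥ 0`.
-/

open Real Finset Filter Function

lemma sum_Ico_sum_Ico_ite_sub_eq (N : ℕ) {m : ℤ} (hm : |m| ≤ N) (r : ℝ) :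
    ∑ k ∈ Ico (0 : ℤ) N, ∑ l ∈ Ico (0 : ℤ) N, (if l - k = m then r else 0)
      = ((N - |m| : ℤ) : ℝ) * r := by
  simp_rw [sub_eq_iff_eq_add, sum_ite_eq', ← sum_filter, sum_const, nsmul_eq_mul]
  have hfilter : (Ico (0 : ℤ) N).filter (fun k => m + k ∈ Ico (0 : ℤ) N)
      = Ico (max 0 (-m)) (min N (N - m)) := by
    ext k; simp only [mem_filter, mem_Ico]; omega
  have hlength : min (N : ℤ) (N - m) - max 0 (-m) = N - |m| := by
    rcases abs_cases m with ⟨h1, h2⟩ | ⟨h1, h2⟩ <;> omega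
  rw [hfilter, Int.card_Ico, hlength, ← Int.cast_natCast, Int.toNat_of_nonneg (by omega)]

lemma nonneg_of_eventually_le_nat_mul {b s : ℝ} (h : ∀ᶠ N : ℕ in atTop, b ≤ N * s) : 0 ≤ s :=
  le_of_tendsto (tendsto_const_div_atTop_nhds_zero_nat b) <|
    (h.and (eventually_gt_atTop 0)).mono fun N ⟨hN, hpos⟩ => by
      rwa [div_le_iff₀ (by exact_mod_cast hpos), mul_comm]

lemma apply_abs_sub_int_mul_two_pi {φ : ℝ → ℝ} (hsupp : ∀ t, π ≤ t → φ t = 0) (δ : ℝ) (k : ℤ) :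
    φ |δ - k * (2 * π)| = if k = round (δ / (2 * π)) then φ (arccos (cos δ)) else 0 := by
  have h2π : 0 < 2 * π := by positivity
  have hscale : |δ - k * (2 * π)| = 2 * π * |δ / (2 * π) - k| := by
    rw [← abs_of_pos h2π, ← abs_mul, abs_of_pos h2π]; congr 1; field_simp
  split_ifs with hk
  · have hle : |δ - k * (2 * π)| ≤ π := by
      rw [hscale, hk]; nlinarith [abs_sub_round (δ / (2 * π))]
    rw [← cos_sub_int_mul_two_pi δ k, ← cos_abs, arccos_cos (abs_nonneg _) hle]
  · apply hsupp
    have hk1 : (1 : ℝ) ≤ |(k : ℝ) - round (δ / (2 * π))| := by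
      exact_mod_cast Int.one_le_abs (sub_ne_zero.2 hk)
    have hround := abs_sub_round (δ / (2 * π))
    have htri := abs_sub_le (k : ℝ) (δ / (2 * π)) (round (δ / (2 * π)))
    rw [hscale, abs_sub_comm]; nlinarith

lemma sum_Ico_sum_Ico_apply_abs_sub {φ : ℝ → ℝ} (hsupp : ∀ t, π ≤ t → φ t = 0) (a b : ℝ) (N : ℕ)
    (hN : |round ((a - b) / (2 * π))| ≤ N) :
    ∑ k ∈ Ico (0 : ℤ) N, ∑ l ∈ Ico (0 : ℤ) N, φ |(a + k * (2 * π)) - (b + l * (2 * π))|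
      = ((N - |round ((a - b) / (2 * π))| : ℤ) : ℝ) * φ (arccos (cos (a - b))) := by
  have hshift : ∀ k l : ℤ,
      (a + k * (2 * π)) - (b + l * (2 * π)) = (a - b) - ((l - k : ℤ) : ℝ) * (2 * π) := by
    intro k l; push_cast; ring
  simp_rw [hshift, apply_abs_sub_int_mul_two_pi hsupp]
  exact sum_Ico_sum_Ico_ite_sub_eq N hN _

lemma IsPosDefOnEuclidean.sum_abs_sub_nonneg {φ : ℝ → ℝ} (hφ : IsPosDefOnEuclidean 1 φ)
    {ι : Type*} {t : ι → ℝ} (ht : Injective t) (s : Finset ι) (c : ι → ℝ) :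
    0 ≤ ∑ p ∈ s, ∑ q ∈ s, c p * c q * φ |t p - t q| := by
  let e := s.equivFin.symm
  have h := hφ _ (fun i => EuclideanSpace.single 0 (t (e i)))
    (fun i j hij => e.injective (Subtype.ext (ht (by simpa using congrArg (· 0) hij))))
    (fun i => c (e i))
  simp_rw [← dist_eq_norm, PiLp.dist_single_same, Real.dist_eq] at h
  simp_rw [← sum_coe_sort s, ← e.sum_comp]
  exact h

theorem IsPosDefOnEuclidean.sum_mul_arccos_cos_nonneg {φ : ℝ → ℝ} (hφ : IsPosDefOnEuclidean 1 φ)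
    (hsupp : ∀ t, π ≤ t → φ t = 0) {ι : Type*} [Fintype ι] {α : ι → ℝ}
    (hα : Injective fun p : ι × ℤ => α p.1 + p.2 * (2 * π)) (c : ι → ℝ) :
    0 ≤ ∑ i, ∑ j, c i * c j * φ (arccos (cos (α i - α j))) := by
  set m : ι → ι → ℤ := fun i j => round ((α i - α j) / (2 * π))
  refine nonneg_of_eventually_le_nat_mul
    (b := ∑ i, ∑ j, c i * c j * (|(m i j : ℝ)| * φ (arccos (cos (α i - α j))))) ?_
  filter_upwards [eventually_all.2 fun i => eventually_all.2 fun j =>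
    eventually_ge_atTop (|m i j|).toNat] with N hN
  have hQ := hφ.sum_abs_sub_nonneg hα (univ ×ˢ Ico (0 : ℤ) N) (fun p => c p.1)
  have hQ_eq : ∑ p ∈ univ ×ˢ Ico (0 : ℤ) N, ∑ q ∈ univ ×ˢ Ico (0 : ℤ) N,
      c p.1 * c q.1 * φ |(α p.1 + p.2 * (2 * π)) - (α q.1 + q.2 * (2 * π))|
      = ∑ i, ∑ j, c i * c j * (((N - |m i j| : ℤ) : ℝ) * φ (arccos (cos (α i - α j)))) := by
    calc _ = ∑ i, ∑ j, c i * c j * ∑ k ∈ Ico (0 : ℤ) N, ∑ l ∈ Ico (0 : ℤ) N,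
          φ |(α i + k * (2 * π)) - (α j + l * (2 * π))| := by
          simp_rw [sum_product, mul_sum]
          exact sum_congr rfl fun i _ => sum_comm
      _ = _ := sum_congr rfl fun i _ => sum_congr rfl fun j _ => by
          rw [sum_Ico_sum_Ico_apply_abs_sub hsupp _ _ N (Int.toNat_le.1 (hN i j))]
  calc _ ≤ ∑ i, ∑ j, c i * c j * (((N - |m i j| : ℤ) : ℝ) * φ (arccos (cos (α i - α j))))
        + ∑ i, ∑ j, c i * c j * (|(m i j : ℝ)| * φ (arccos (cos (α i - α j)))) :=
        le_add_of_nonneg_left (hQ_eq ▸ hQ)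
    _ = _ := by
        simp only [mul_sum, ← sum_add_distrib]
        push_cast
        exact sum_congr rfl fun i _ => sum_congr rfl fun j _ => by ring

lemma exists_eq_cos_sin_of_norm_eq_one {v : EuclideanSpace ℝ (Fin 2)} (hv : ‖v‖ = 1) :
    ∃ θ : ℝ, v = !₂[cos θ, sin θ] := by
  have hz : ‖Complex.orthonormalBasisOneI.repr.symm v‖ = 1 := by
    rwa [LinearIsometryEquiv.norm_map]
  obtain ⟨θ, hθ⟩ := (Complex.norm_eq_one_iff _).1 hz
  refine ⟨θ, ?_⟩
  ext i
  fin_cases i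
  · simpa using (congrArg Complex.re hθ).symm
  · simpa using (congrArg Complex.im hθ).symm

lemma inner_cos_sin (a b : ℝ) :
    inner ℝ !₂[cos a, sin a] !₂[cos b, sin b] = cos (a - b) := by
  simp only [PiLp.inner_apply, RCLike.inner_apply, ringHom_apply, Fin.sum_univ_two,
    Matrix.cons_val_zero, Matrix.cons_val_one, cos_sub]
  ring

lemma injective_add_int_mul_two_pi {ι : Type*} {α : ι → ℝ}
    (hα : Injective fun i => !₂[cos (α i), sin (α i)]) :
    Injective fun p : ι × ℤ => α p.1 + p.2 * (2 * π) := by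
  rintro ⟨i, k⟩ ⟨j, l⟩ hij
  dsimp only at hij
  have hshift : α i = α j + ((l - k : ℤ) : ℝ) * (2 * π) := by push_cast; linarith
  obtain rfl : i = j := hα (by simp only [hshift, cos_add_int_mul_two_pi, sin_add_int_mul_two_pi])
  simpa using hij

/-- If `φ ∈ Φ_1` vanishes beyond `π`, then its restriction to
`[0,π]` belongs to `Ψ_1`. -/
theorem stmt_0 (φ : ℝ → ℝ) (hφ : memPhi 1 φ)
    (hsupp : ∀ t : ℝ, Real.pi ≤ t → φ t = 0) :
    memPsi 1 φ := by
  obtain ⟨hcont, hone, hpd⟩ := hφ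
  refine ⟨hcont.mono Set.Icc_subset_Ici_self, hone, fun n x hx hinj c => ?_⟩
  choose α hα using fun i => exists_eq_cos_sin_of_norm_eq_one (hx i)
  rw [funext hα] at hinj
  simp only [hα]
  convert hpd.sum_mul_arccos_cos_nonneg hsupp (injective_add_int_mul_two_pi hinj) c using 6
  exact inner_cos_sin _ _
end
end

section
/- For all real numbers τ > 0 and δ ∈ (0,1), the multiquadric function ψ defined by ψ(θ) = (1−δ)^{2τ} / (1 + δ^2 − 2δ cos θ)^τ for θ ∈ [0,π] belongs to the class Ψ_d^+ for every integer d ≥ 1; in other words, ψ belongs to the class Ψ_∞^+. -/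
open scoped BigOperators

noncomputable section

/-!
For `u = 2δ / (1 + δ²) ∈ (0, 1)` one has `1 + δ² - 2δ cos θ = (1 + δ²)(1 - u cos θ)`, so by the
binomial series `ψ(θ) = ∑ₖ aₖ cos θᵏ` with every `aₖ > 0`. For unit vectors `xᵢ` the quadratic form
of `⟪xᵢ, xⱼ⟫ᵏ` is a sum of squares `∑_α (∑ᵢ cᵢ ∏ₘ xᵢ(αₘ))²` (the coordinates of `∑ᵢ cᵢ xᵢ^⊗k`), so
each term of `∑ᵢⱼ cᵢ cⱼ ψ(θ(xᵢ, xⱼ))` is nonnegative. If all vanished, then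
`∑ᵢ cᵢ ⟪xᵢ, xⱼ⟫ᵏ = 0` for every `k`; since `⟪xᵢ, xⱼ⟫ < 1 = ⟪xⱼ, xⱼ⟫` for `i ≠ j`, evaluating at the
`⟪xᵢ, xⱼ⟫` a polynomial vanishing exactly at the other values forces `cⱼ = 0`.
-/

open Finset

lemma Ring.multichoose_pos_of_pos {τ : ℝ} (hτ : 0 < τ) (n : ℕ) : 0 < Ring.multichoose τ n := by
  have h := Ring.factorial_nsmul_multichoose_eq_ascPochhammer τ n
  rw [Polynomial.ascPochhammer_smeval_eq_eval, nsmul_eq_mul] at h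
  have := ascPochhammer_pos n τ hτ
  exact pos_of_mul_pos_right (h ▸ this) (Nat.cast_nonneg _)

lemma hasSum_multichoose_mul_pow (τ : ℝ) {z : ℝ} (hz : |z| < 1) :
    HasSum (fun n ↦ Ring.multichoose τ n * z ^ n) ((1 - z) ^ τ)⁻¹ := by
  have h := (Real.one_div_one_sub_rpow_hasFPowerSeriesOnBall_zero τ).hasSum
    (y := z) (by simpa [enorm_eq_nnnorm, ← NNReal.coe_lt_coe] using hz)
  simpa [FormalMultilinearSeries.ofScalars_apply_eq, Ring.multichoose_eq, mul_comm] using h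

section PowerSums

variable {R ι : Type*} [CommRing R] [Fintype ι] {c w : ι → R}

lemma sum_mul_eval_eq_zero_of_sum_mul_pow_eq_zero (h : ∀ k : ℕ, ∑ i, c i * w i ^ k = 0)
    (p : Polynomial R) : ∑ i, c i * p.eval (w i) = 0 := by
  simp_rw [Polynomial.eval_eq_sum_range, mul_sum, sum_comm (s := univ),
    mul_left_comm (c _), ← mul_sum, h, mul_zero, sum_const_zero]

lemma eq_zero_of_sum_mul_pow_eq_zero [IsDomain R] [DecidableEq ι]
    (h : ∀ k : ℕ, ∑ i, c i * w i ^ k = 0) (j : ι) (hw : ∀ i ≠ j, w i ≠ w j) : c j = 0 := by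
  set q := ∏ i ∈ univ.erase j, (Polynomial.X - Polynomial.C (w i))
  have hq : ∀ i, q.eval (w i) = ∏ l ∈ univ.erase j, (w i - w l) := fun i ↦ by
    simp [q, Polynomial.eval_prod]
  have hqj : q.eval (w j) ≠ 0 := by
    rw [hq, prod_ne_zero_iff]
    exact fun i hi ↦ sub_ne_zero.2 (hw i (ne_of_mem_erase hi)).symm
  have hsum := sum_mul_eval_eq_zero_of_sum_mul_pow_eq_zero h q
  rw [sum_eq_single j (fun i _ hi ↦ by rw [hq, prod_eq_zero (mem_erase.2 ⟨hi, mem_univ i⟩)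
    (sub_self _), mul_zero]) (by simp)] at hsum
  exact (mul_eq_zero.1 hsum).resolve_right hqj

end PowerSums

section InnerPow

variable {ι κ : Type*} [Fintype ι] [Fintype κ]

open scoped RealInnerProductSpace

lemma EuclideanSpace.real_inner_pow_eq_sum (x y : EuclideanSpace ℝ κ) (k : ℕ) :
    ⟪x, y⟫ ^ k = ∑ α : Fin k → κ, (∏ m, x (α m)) * ∏ m, y (α m) := by
  simp_rw [PiLp.inner_apply, RCLike.inner_apply, conj_trivial, sum_pow', Fintype.piFinset_univ,
    ← prod_mul_distrib, mul_comm]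

lemma sum_mul_real_inner_pow_eq (x : ι → EuclideanSpace ℝ κ) (c : ι → ℝ)
    (y : EuclideanSpace ℝ κ) (k : ℕ) :
    ∑ i, c i * ⟪x i, y⟫ ^ k
      = ∑ α : Fin k → κ, (∑ i, c i * ∏ m, x i (α m)) * ∏ m, y (α m) := by
  simp_rw [EuclideanSpace.real_inner_pow_eq_sum, mul_sum, sum_mul, mul_assoc]
  exact sum_comm

lemma sum_sum_mul_real_inner_pow_eq_sum_sq (x : ι → EuclideanSpace ℝ κ) (c : ι → ℝ) (k : ℕ) :
    ∑ i, ∑ j, c i * c j * ⟪x i, x j⟫ ^ k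
      = ∑ α : Fin k → κ, (∑ i, c i * ∏ m, x i (α m)) ^ 2 := by
  calc ∑ i, ∑ j, c i * c j * ⟪x i, x j⟫ ^ k
      = ∑ j, c j * ∑ i, c i * ⟪x i, x j⟫ ^ k := by
        rw [sum_comm]; simp_rw [mul_sum, mul_comm (c _) (c _), mul_assoc]
    _ = ∑ α : Fin k → κ, (∑ i, c i * ∏ m, x i (α m)) * ∑ j, c j * ∏ m, x j (α m) := by
        simp_rw [sum_mul_real_inner_pow_eq, mul_sum]
        rw [sum_comm]
        simp_rw [mul_left_comm (c _)]
    _ = ∑ α : Fin k → κ, (∑ i, c i * ∏ m, x i (α m)) ^ 2 := by simp_rw [sq]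

lemma eq_zero_of_forall_sum_sum_mul_real_inner_pow_eq_zero [DecidableEq ι]
    {x : ι → EuclideanSpace ℝ κ} (hx : ∀ i, ‖x i‖ = 1) (hinj : Function.Injective x)
    {c : ι → ℝ} (h : ∀ k : ℕ, ∑ i, ∑ j, c i * c j * ⟪x i, x j⟫ ^ k = 0) : c = 0 := by
  have hcoord : ∀ (k : ℕ) (α : Fin k → κ), ∑ i, c i * ∏ m, x i (α m) = 0 := fun k α ↦ by
    have hk := h k
    rw [sum_sum_mul_real_inner_pow_eq_sum_sq,
      sum_eq_zero_iff_of_nonneg fun _ _ ↦ sq_nonneg _] at hk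
    exact pow_eq_zero_iff two_ne_zero |>.1 (hk α (mem_univ α))
  ext j
  refine eq_zero_of_sum_mul_pow_eq_zero (w := fun i ↦ ⟪x i, x j⟫) (fun k ↦ ?_) j fun i hi ↦ ?_
  · simp [sum_mul_real_inner_pow_eq, hcoord]
  · rw [inner_self_eq_one_of_norm_eq_one (hx j)]
    exact ((inner_lt_one_iff_real_of_norm_eq_one (hx i) (hx j)).2 (hinj.ne hi)).ne

lemma sum_sum_mul_pos_of_hasSum_pow {f : ℝ → ℝ} {a : ℕ → ℝ} (ha : ∀ k, 0 < a k)
    (hf : ∀ s ∈ Set.Icc (-1 : ℝ) 1, HasSum (fun k ↦ a k * s ^ k) (f s))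
    {x : ι → EuclideanSpace ℝ κ} (hx : ∀ i, ‖x i‖ = 1) (hinj : Function.Injective x)
    {c : ι → ℝ} (hc : c ≠ 0) :
    0 < ∑ i, ∑ j, c i * c j * f ⟪x i, x j⟫ := by
  classical
  set Q : ℕ → ℝ := fun k ↦ ∑ i, ∑ j, c i * c j * ⟪x i, x j⟫ ^ k
  have hQ : ∀ k, 0 ≤ Q k := fun k ↦ by
    simp only [Q, sum_sum_mul_real_inner_pow_eq_sum_sq]
    positivity
  have hsum : HasSum (fun k ↦ a k * Q k) (∑ i, ∑ j, c i * c j * f ⟪x i, x j⟫) := by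
    simp_rw [Q, mul_sum, mul_left_comm (a _)]
    exact hasSum_sum fun i _ ↦ hasSum_sum fun j _ ↦
      (hf _ (real_inner_mem_Icc_of_norm_eq_one (hx i) (hx j))).mul_left (c i * c j)
  obtain ⟨k, hk⟩ : ∃ k, 0 < Q k := by
    by_contra! h
    exact hc (eq_zero_of_forall_sum_sum_mul_real_inner_pow_eq_zero hx hinj
      fun k ↦ (h k).antisymm (hQ k))
  rw [← hsum.tsum_eq]
  exact hsum.summable.tsum_pos (fun k ↦ mul_nonneg (ha k).le (hQ k)) k (mul_pos (ha k) hk)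

end InnerPow

open Real

lemma isStrictPosDefOnSphere_of_hasSum_cos_pow {d : ℕ} {ψ : ℝ → ℝ} {a : ℕ → ℝ}
    (ha : ∀ k, 0 < a k) (hψ : ∀ θ ∈ Set.Icc 0 π, HasSum (fun k ↦ a k * cos θ ^ k) (ψ θ)) :
    IsStrictPosDefOnSphere d ψ := fun _ _ hx hinj _ hc ↦
  sum_sum_mul_pos_of_hasSum_pow (f := fun s ↦ ψ (arccos s)) ha
    (fun s hs ↦ by simpa [cos_arccos hs.1 hs.2] using hψ _ ⟨arccos_nonneg s, arccos_le_pi s⟩)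
    hx hinj hc

lemma hasSum_multiquadric (τ : ℝ) {δ t : ℝ} (hδ : |δ| < 1) (ht : |t| ≤ 1) :
    HasSum
      (fun k ↦ (1 - δ) ^ (2 * τ) / (1 + δ ^ 2) ^ τ *
        (Ring.multichoose τ k * (2 * δ / (1 + δ ^ 2)) ^ k) * t ^ k)
      ((1 - δ) ^ (2 * τ) / (1 + δ ^ 2 - 2 * δ * t) ^ τ) := by
  have hpos : 0 < 1 + δ ^ 2 := by positivity
  set u := 2 * δ / (1 + δ ^ 2)
  have hu : |u| < 1 := by
    rw [abs_div, abs_of_pos hpos, div_lt_one hpos, abs_mul, abs_two, ← sq_abs δ]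
    nlinarith [abs_nonneg δ]
  have hut : |u * t| < 1 := by
    rw [abs_mul]; exact (mul_le_of_le_one_right (abs_nonneg u) ht).trans_lt hu
  have hfactor : 1 + δ ^ 2 - 2 * δ * t = (1 + δ ^ 2) * (1 - u * t) := by
    simp only [u]; field_simp
  have h1ut : 0 ≤ 1 - u * t := by linarith [le_abs_self (u * t)]
  rw [hfactor, mul_rpow hpos.le h1ut, ← div_div, div_eq_mul_inv _ ((1 - u * t) ^ τ)]
  have hsum := (hasSum_multichoose_mul_pow τ hut).mul_left ((1 - δ) ^ (2 * τ) / (1 + δ ^ 2) ^ τ)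
  simp_rw [mul_pow, ← mul_assoc] at hsum ⊢
  exact hsum

/-- the multiquadric family belongs to `Ψ_d^+` for every `d ≥ 1`,
i.e. to `Ψ_∞^+`. -/
theorem stmt_16 (τ δ : ℝ) (hτ : 0 < τ) (hδ : δ ∈ Set.Ioo (0:ℝ) 1) :
    ∀ d : ℕ, 1 ≤ d → memPsiPlus d
      (fun θ => (1 - δ) ^ (2 * τ) / (1 + δ ^ 2 - 2 * δ * Real.cos θ) ^ τ) := by
  obtain ⟨hδ0, hδ1⟩ := hδ
  have hden : ∀ θ, 0 < 1 + δ ^ 2 - 2 * δ * cos θ := fun θ ↦ by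
    nlinarith [cos_le_one θ]
  intro d _
  refine ⟨?_, ?_, isStrictPosDefOnSphere_of_hasSum_cos_pow (fun k ↦ ?_)
    fun θ _ ↦ hasSum_multiquadric τ (abs_lt.2 ⟨by linarith, hδ1⟩) (abs_cos_le_one θ)⟩
  · exact Continuous.continuousOn <| continuous_const.div
      ((continuous_const.sub (continuous_const.mul continuous_cos)).rpow_const
        fun θ ↦ .inl (hden θ).ne') fun θ ↦ (rpow_pos_of_pos (hden θ) τ).ne'
  · have h1δ : 0 < 1 - δ := by linarith
    beta_reduce
    rw [cos_zero, show 1 + δ ^ 2 - 2 * δ * 1 = (1 - δ) ^ (2 : ℝ) by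
      rw [rpow_two]; ring, ← rpow_mul h1δ.le, mul_comm, div_self (rpow_pos_of_pos h1δ _).ne']
  · have := Ring.multichoose_pos_of_pos hτ k
    have : 0 < 1 - δ := by linarith
    positivity
end
end

section
/- For every real number α ∈ (0,2), the sine power function ψ defined by ψ(θ) = 1 − (sin(θ/2))^α for θ ∈ [0,π] belongs to the class Ψ_d^+ for every integer d ≥ 1; in other words, ψ belongs to the class Ψ_∞^+. -/
open scoped BigOperators

noncomputable section

open Real Finset MeasureTheory Set
open scoped Nat

/-!
Put `β = α / 2 ∈ (0, 1)` and `s = ⟪x, y⟫`. Then `ψ (θ (x, y)) = 1 - ((1 - s) / 2) ^ β`, and for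
`r ≥ 0`, `1 - r ^ β = C⁻¹ ∫₀^∞ (e^{-rt} - e^{-t}) t^{-1-β} dt` with a constant `C > 0`. As
`e^{-(1-s)t/2} = e^{-t/2} e^{ts/2}`, the form `∑ cᵢ cⱼ ψ (θ (xᵢ, xⱼ))` is `C⁻¹` times the integral
of `e^{-t/2} (∑ cᵢ cⱼ e^{t sᵢⱼ/2} - e^{-t/2} (∑ cᵢ)²) t^{-1-β}`.

Expanding the exponential, `∑ cᵢ cⱼ e^{u sᵢⱼ} = ∑ₖ uᵏ/k! ∑ cᵢ cⱼ sᵢⱼᵏ`, where `∑ cᵢ cⱼ sᵢⱼᵏ` is the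
squared norm of `∑ cᵢ xᵢ^{⊗k}` and equals `(∑ cᵢ)²` for `k = 0`. If the `xᵢ` are distinct and
`c ≠ 0`, these cannot all vanish: otherwise `∑ cᵢ e^{⟪xᵢ, w⟫} = 0` for all `w`, against the linear
independence of distinct characters. Hence the integrand is positive for every `t > 0`.
-/

lemma setIntegral_Ioi_pos {f : ℝ → ℝ} {a : ℝ} (hf : IntegrableOn f (Ioi a))
    (hpos : ∀ t ∈ Ioi a, 0 < f t) : 0 < ∫ t in Ioi a, f t := by
  rw [setIntegral_pos_iff_support_of_nonneg_ae
    (ae_restrict_of_forall_mem measurableSet_Ioi fun t ht => (hpos t ht).le) hf]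
  have : Ioi a ⊆ Function.support f ∩ Ioi a := fun t ht => ⟨(hpos t ht).ne', ht⟩
  exact (measure_mono this).trans_lt' (by simp)

section StableIntegral

variable {β : ℝ}

lemma integrableOn_one_sub_exp_mul_rpow (hβ0 : 0 < β) (hβ1 : β < 1) {r : ℝ} (hr : 0 ≤ r) :
    IntegrableOn (fun t => (1 - exp (-(r * t))) * t ^ (-1 - β)) (Ioi 0) := by
  have hmeas : AEStronglyMeasurable (fun t : ℝ => (1 - exp (-(r * t))) * t ^ (-1 - β)) := by
    fun_prop
  have hbound (t : ℝ) (ht : 0 < t) :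
      0 ≤ 1 - exp (-(r * t)) ∧ 1 - exp (-(r * t)) ≤ min (r * t) 1 := by
    refine ⟨sub_nonneg.mpr (exp_le_one_iff.mpr (by nlinarith)), le_min ?_ ?_⟩
    · linarith [add_one_le_exp (-(r * t))]
    · linarith [exp_pos (-(r * t))]
  rw [← Ioc_union_Ioi_eq_Ioi zero_le_one]
  refine IntegrableOn.union ?_ ?_
  · refine Integrable.mono' (g := fun t => r * t ^ (-β)) ?_ hmeas.restrict ?_
    · exact (intervalIntegral.intervalIntegrable_rpow' (by linarith)).1.const_mul r
    · refine ae_restrict_of_forall_mem measurableSet_Ioc fun t ⟨ht0, _⟩ => ?_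
      obtain ⟨h0, h1⟩ := hbound t ht0
      rw [norm_of_nonneg (mul_nonneg h0 (rpow_nonneg ht0.le _))]
      calc (1 - exp (-(r * t))) * t ^ (-1 - β) ≤ r * t * t ^ (-1 - β) :=
            mul_le_mul_of_nonneg_right (h1.trans (min_le_left _ _)) (rpow_nonneg ht0.le _)
        _ = r * t ^ (-β) := by
            rw [mul_assoc, ← rpow_one_add' ht0.le (by intro h; linarith)]
            ring_nf
  · refine Integrable.mono' (integrableOn_Ioi_rpow_of_lt (a := -1 - β) (by linarith) one_pos)
      hmeas.restrict ?_
    refine ae_restrict_of_forall_mem measurableSet_Ioi fun t (ht : 1 < t) => ?_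
    obtain ⟨h0, h1⟩ := hbound t (by linarith)
    have hpow := rpow_nonneg (zero_le_one.trans ht.le) (-1 - β)
    rw [norm_of_nonneg (mul_nonneg h0 hpow)]
    exact mul_le_of_le_one_left hpow (h1.trans (min_le_right _ _))

lemma integrableOn_exp_sub_exp_mul_rpow (hβ0 : 0 < β) (hβ1 : β < 1) {r : ℝ} (hr : 0 ≤ r) :
    IntegrableOn (fun t => (exp (-(r * t)) - exp (-t)) * t ^ (-1 - β)) (Ioi 0) :=
  ((integrableOn_one_sub_exp_mul_rpow hβ0 hβ1 zero_le_one).sub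
    (integrableOn_one_sub_exp_mul_rpow hβ0 hβ1 hr)).congr_fun
    (fun t _ => by simp only [Pi.sub_apply, one_mul]; ring) measurableSet_Ioi

/-- In closed form, `levyConst β = Γ (1 - β) / β`. -/
def levyConst (β : ℝ) : ℝ := ∫ t in Ioi 0, (1 - exp (-t)) * t ^ (-1 - β)

lemma levyConst_pos (hβ0 : 0 < β) (hβ1 : β < 1) : 0 < levyConst β :=
  setIntegral_Ioi_pos (by simpa using integrableOn_one_sub_exp_mul_rpow hβ0 hβ1 zero_le_one)
    fun t ht => mul_pos (sub_pos.mpr (exp_lt_one_iff.mpr (neg_lt_zero.mpr ht)))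
      (rpow_pos_of_pos ht _)

lemma integral_one_sub_exp_mul_rpow (hβ : β ≠ 0) {r : ℝ} (hr : 0 ≤ r) :
    ∫ t in Ioi 0, (1 - exp (-(r * t))) * t ^ (-1 - β) = r ^ β * levyConst β := by
  rcases hr.eq_or_lt with rfl | hr0
  · simp [zero_rpow hβ]
  have hscale : EqOn (fun t => (1 - exp (-(r * t))) * t ^ (-1 - β))
      (fun t => r ^ (1 + β) * ((1 - exp (-(r * t))) * (r * t) ^ (-1 - β))) (Ioi 0) := by
    intro t (ht : 0 < t)
    dsimp only
    rw [mul_rpow hr0.le ht.le, mul_left_comm, ← mul_assoc (r ^ (1 + β)), ← rpow_add hr0]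
    simp
  calc ∫ t in Ioi 0, (1 - exp (-(r * t))) * t ^ (-1 - β)
      = r ^ (1 + β) * (r⁻¹ * levyConst β) := by
        rw [setIntegral_congr_fun measurableSet_Ioi hscale, integral_const_mul,
          integral_comp_mul_left_Ioi (fun u => (1 - exp (-u)) * u ^ (-1 - β)) 0 hr0,
          mul_zero, smul_eq_mul, levyConst]
    _ = r ^ β * levyConst β := by
        rw [← rpow_neg_one, ← mul_assoc, ← rpow_add hr0]
        ring_nf

lemma one_sub_rpow_eq_integral (hβ0 : 0 < β) (hβ1 : β < 1) {r : ℝ} (hr : 0 ≤ r) :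
    1 - r ^ β
      = (levyConst β)⁻¹ * ∫ t in Ioi 0, (exp (-(r * t)) - exp (-t)) * t ^ (-1 - β) := by
  have hsub : ∫ t in Ioi 0, (exp (-(r * t)) - exp (-t)) * t ^ (-1 - β)
      = (∫ t in Ioi 0, (1 - exp (-(1 * t))) * t ^ (-1 - β))
        - ∫ t in Ioi 0, (1 - exp (-(r * t))) * t ^ (-1 - β) := by
    rw [← integral_sub (integrableOn_one_sub_exp_mul_rpow hβ0 hβ1 zero_le_one)
      (integrableOn_one_sub_exp_mul_rpow hβ0 hβ1 hr)]
    congr 1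
    ext t
    ring_nf
  rw [hsub, integral_one_sub_exp_mul_rpow hβ0.ne' zero_le_one,
    integral_one_sub_exp_mul_rpow hβ0.ne' hr, one_rpow]
  field_simp [(levyConst_pos hβ0 hβ1).ne']

end StableIntegral

lemma hasSum_pow_div_factorial_exp (s : ℝ) : HasSum (fun n => s ^ n / n !) (exp s) := by
  rw [exp_eq_exp_ℝ]
  exact NormedSpace.expSeries_div_hasSum_exp s

section GramPowers

variable {ι κ : Type*} [Fintype ι] [Fintype κ]

lemma inner_pow_eq_sum_prod_mul_prod (v w : EuclideanSpace ℝ κ) (k : ℕ) :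
    inner ℝ v w ^ k = ∑ m : Fin k → κ, (∏ t, v (m t)) * ∏ t, w (m t) := by
  simp only [PiLp.inner_apply, RCLike.inner_apply, conj_trivial, Fintype.sum_pow,
    ← prod_mul_distrib, mul_comm (w _)]

lemma sum_sum_mul_inner_pow_eq_sum_sq (x : ι → EuclideanSpace ℝ κ) (c : ι → ℝ) (k : ℕ) :
    ∑ i, ∑ j, c i * c j * inner ℝ (x i) (x j) ^ k
      = ∑ m : Fin k → κ, (∑ i, c i * ∏ t, x i (m t)) ^ 2 := by
  simp_rw [sq, sum_mul_sum, inner_pow_eq_sum_prod_mul_prod, mul_sum]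
  symm
  rw [sum_comm]
  refine sum_congr rfl fun i _ => ?_
  rw [sum_comm]
  exact sum_congr rfl fun j _ => sum_congr rfl fun m _ => by ring

lemma sum_sum_mul_inner_pow_nonneg (x : ι → EuclideanSpace ℝ κ) (c : ι → ℝ) (k : ℕ) :
    0 ≤ ∑ i, ∑ j, c i * c j * inner ℝ (x i) (x j) ^ k := by
  rw [sum_sum_mul_inner_pow_eq_sum_sq]
  positivity

lemma hasSum_sum_sum_mul_exp_inner (x : ι → EuclideanSpace ℝ κ) (c : ι → ℝ) (u : ℝ) :
    HasSum (fun k : ℕ => u ^ k / k ! * ∑ i, ∑ j, c i * c j * inner ℝ (x i) (x j) ^ k)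
      (∑ i, ∑ j, c i * c j * exp (u * inner ℝ (x i) (x j))) := by
  simp_rw [mul_sum]
  refine hasSum_sum fun i _ => hasSum_sum fun j _ => ?_
  refine ((hasSum_pow_div_factorial_exp _).mul_left (c i * c j)).congr_fun fun k => ?_
  ring

lemma sum_mul_inner_pow_eq_zero_of_sum_sum_mul_inner_pow_eq_zero {x : ι → EuclideanSpace ℝ κ}
    {c : ι → ℝ} {k : ℕ} (h : ∑ i, ∑ j, c i * c j * inner ℝ (x i) (x j) ^ k = 0)
    (w : EuclideanSpace ℝ κ) : ∑ i, c i * inner ℝ (x i) w ^ k = 0 := by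
  rw [sum_sum_mul_inner_pow_eq_sum_sq,
    Fintype.sum_eq_zero_iff_of_nonneg fun _ => sq_nonneg _] at h
  simp_rw [inner_pow_eq_sum_prod_mul_prod, mul_sum, ← mul_assoc]
  rw [sum_comm]
  refine sum_eq_zero fun m _ => ?_
  rw [← sum_mul, pow_eq_zero_iff two_ne_zero |>.mp (congrFun h m), zero_mul]

lemma eq_zero_of_forall_sum_sum_mul_inner_pow_eq_zero {x : ι → EuclideanSpace ℝ κ}
    (hx : Function.Injective x) {c : ι → ℝ}
    (h : ∀ k, ∑ i, ∑ j, c i * c j * inner ℝ (x i) (x j) ^ k = 0) : c = 0 := by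
  have hexp (w : EuclideanSpace ℝ κ) : ∑ i, c i * exp (inner ℝ (x i) w) = 0 := by
    refine ((hasSum_sum fun i _ => (hasSum_pow_div_factorial_exp _).mul_left (c i)).congr_fun
      fun k => ?_).unique hasSum_zero
    simp_rw [← mul_div_assoc, ← sum_div,
      sum_mul_inner_pow_eq_zero_of_sum_sum_mul_inner_pow_eq_zero (h k) w, zero_div]
  let χ : ι → Multiplicative (EuclideanSpace ℝ κ) →* ℝ := fun i =>
    { toFun := fun w => exp (inner ℝ (x i) w.toAdd)
      map_one' := by simp
      map_mul' := fun v w => by simp [inner_add_right, exp_add] }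
  have hχ : Function.Injective χ := fun i j hij => hx <| ext_inner_right ℝ fun v =>
    exp_injective (DFunLike.congr_fun hij (Multiplicative.ofAdd v))
  exact funext <| Fintype.linearIndependent_iff.mp ((linearIndependent_monoidHom _ ℝ).comp χ hχ) c
    (funext fun w => by simpa [χ] using hexp w.toAdd)

lemma sq_sum_le_sum_sum_mul_exp_inner (x : ι → EuclideanSpace ℝ κ) (c : ι → ℝ) {u : ℝ}
    (hu : 0 ≤ u) : (∑ i, c i) ^ 2 ≤ ∑ i, ∑ j, c i * c j * exp (u * inner ℝ (x i) (x j)) := by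
  simpa [sq, sum_mul_sum] using le_hasSum (hasSum_sum_sum_mul_exp_inner x c u) 0
    fun k _ => mul_nonneg (by positivity) (sum_sum_mul_inner_pow_nonneg x c k)

lemma sum_sum_mul_exp_inner_pos {x : ι → EuclideanSpace ℝ κ} (hx : Function.Injective x)
    {c : ι → ℝ} (hc : c ≠ 0) {u : ℝ} (hu : 0 < u) :
    0 < ∑ i, ∑ j, c i * c j * exp (u * inner ℝ (x i) (x j)) := by
  obtain ⟨k, hk⟩ : ∃ k, ∑ i, ∑ j, c i * c j * inner ℝ (x i) (x j) ^ k ≠ 0 := by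
    by_contra! h
    exact hc (eq_zero_of_forall_sum_sum_mul_inner_pow_eq_zero hx h)
  refine lt_of_lt_of_le ?_ (le_hasSum (hasSum_sum_sum_mul_exp_inner x c u) k
    fun k _ => mul_nonneg (by positivity) (sum_sum_mul_inner_pow_nonneg x c k))
  exact mul_pos (by positivity) ((sum_sum_mul_inner_pow_nonneg x c k).lt_of_ne' hk)

lemma sum_sum_mul_exp_sub_exp_pos {x : ι → EuclideanSpace ℝ κ} (hx : Function.Injective x)
    {c : ι → ℝ} (hc : c ≠ 0) {t : ℝ} (ht : 0 < t) :
    0 < ∑ i, ∑ j, c i * c j * (exp (-((1 - inner ℝ (x i) (x j)) / 2 * t)) - exp (-t)) := by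
  have hsplit (s : ℝ) : exp (-((1 - s) / 2 * t)) - exp (-t)
      = exp (-(t / 2)) * (exp (t / 2 * s) - exp (-(t / 2))) := by
    rw [mul_sub, ← exp_add, ← exp_add]
    ring_nf
  have hform : ∑ i, ∑ j, c i * c j * (exp (-((1 - inner ℝ (x i) (x j)) / 2 * t)) - exp (-t))
      = exp (-(t / 2)) * (∑ i, ∑ j, c i * c j * exp (t / 2 * inner ℝ (x i) (x j))
          - exp (-(t / 2)) * (∑ i, c i) ^ 2) := by
    simp_rw [hsplit, sq, sum_mul_sum, mul_sum, ← sum_sub_distrib, mul_sum]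
    exact sum_congr rfl fun i _ => sum_congr rfl fun j _ => by ring
  rw [hform]
  refine mul_pos (exp_pos _) (sub_pos.mpr ?_)
  have hS := sq_sum_le_sum_sum_mul_exp_inner x c (half_pos ht).le
  rcases (sq_nonneg (∑ i, c i)).eq_or_lt with h0 | hpos
  · simpa [← h0] using sum_sum_mul_exp_inner_pos hx hc (half_pos ht)
  · calc exp (-(t / 2)) * (∑ i, c i) ^ 2 < (∑ i, c i) ^ 2 :=
          mul_lt_of_lt_one_left hpos (exp_lt_one_iff.mpr (by linarith))
      _ ≤ _ := hS

end GramPowers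

lemma sin_half_arccos_rpow {s : ℝ} (hs₁ : -1 ≤ s) (hs₂ : s ≤ 1) (α : ℝ) :
    sin (arccos s / 2) ^ α = ((1 - s) / 2) ^ (α / 2) := by
  rw [sin_half_eq_sqrt (arccos_nonneg s) (by linarith [arccos_le_pi s, pi_pos]),
    cos_arccos hs₁ hs₂, sqrt_eq_rpow, ← rpow_mul (by linarith)]
  ring_nf

lemma integral_sum_sum_mul {ι X : Type*} [Fintype ι] [MeasurableSpace X] {μ : Measure X}
    {f : ι → ι → X → ℝ} (hf : ∀ i j, Integrable (f i j) μ) (c : ι → ℝ) :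
    ∫ t, ∑ i, ∑ j, c i * c j * f i j t ∂μ = ∑ i, ∑ j, c i * c j * ∫ t, f i j t ∂μ := by
  rw [integral_finsetSum _ fun i _ => integrable_finsetSum _ fun j _ => (hf i j).const_mul _]
  simp_rw [integral_finsetSum _ fun j _ => (hf _ j).const_mul _, integral_const_mul]

/-- the sine power family belongs to `Ψ_d^+` for every `d ≥ 1`,
i.e. to `Ψ_∞^+`. -/
theorem stmt_17 (α : ℝ) (hα : α ∈ Set.Ioo (0:ℝ) 2) :
    ∀ d : ℕ, 1 ≤ d → memPsiPlus d (fun θ => 1 - Real.sin (θ / 2) ^ α) := by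
  obtain ⟨hα0, hα2⟩ := hα
  intro d _
  refine ⟨?_, by simp [zero_rpow hα0.ne'], ?_⟩
  · exact (continuous_const.sub ((continuous_sin.comp (continuous_id.div_const 2)).rpow_const
      fun _ => Or.inr hα0.le)).continuousOn
  intro n x hx hinj c hc
  have hβ0 : 0 < α / 2 := half_pos hα0
  have hβ1 : α / 2 < 1 := by linarith
  have hs (i j : Fin n) : -1 ≤ inner ℝ (x i) (x j) ∧ inner ℝ (x i) (x j) ≤ 1 :=
    abs_le.mp (by simpa [hx i, hx j] using abs_real_inner_le_norm (x i) (x j))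
  have hr (i j : Fin n) : 0 ≤ (1 - inner ℝ (x i) (x j)) / 2 := by linarith [hs i j]
  have hint (i j : Fin n) := integrableOn_exp_sub_exp_mul_rpow hβ0 hβ1 (hr i j)
  have hkernel (i j : Fin n) : 1 - sin (arccos (inner ℝ (x i) (x j)) / 2) ^ α
      = (levyConst (α / 2))⁻¹ * ∫ t in Ioi 0,
          (exp (-((1 - inner ℝ (x i) (x j)) / 2 * t)) - exp (-t)) * t ^ (-1 - α / 2) := by
    rw [sin_half_arccos_rpow (hs i j).1 (hs i j).2, one_sub_rpow_eq_integral hβ0 hβ1 (hr i j)]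
  simp_rw [hkernel, mul_left_comm _ (levyConst (α / 2))⁻¹, ← mul_sum, ← integral_sum_sum_mul hint]
  refine mul_pos (inv_pos.mpr (levyConst_pos hβ0 hβ1)) (setIntegral_Ioi_pos
    (integrable_finsetSum _ fun i _ => integrable_finsetSum _ fun j _ => (hint i j).const_mul _)
    fun t (ht : 0 < t) => ?_)
  simp_rw [← mul_assoc, ← sum_mul]
  exact mul_pos (sum_sum_mul_exp_sub_exp_pos hinj hc ht) (rpow_pos_of_pos ht _)
end
end
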